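/- arXiv:2001.02487 — 5 statements merged into one kernel-verified Lean document; each statement's English description precedes it below -/
import Mathlib

section
/- If a, b are C² functions of (x,t) satisfying ∂a/∂t = −c(t)·∂a/∂x + λ(t)·(b−a) and ∂b/∂t = c(t)·∂b/∂x + λ(t)·(a−b) with c(t) > 0 for all t, then p = a + b satisfies the telegraph equation with time-varying coefficients: (1/c(t))·∂/∂t[(1/c(t))·∂p/∂t] + (2λ(t)/c(t)²)·∂p/∂t = ∂²p/∂x². -/
/-!
With `q = b - a` the system reads `∂ₜp = c ∂ₓq` and `∂ₜq = c ∂ₓp - 2λq`. So `(1/c) ∂ₜp = ∂ₓq`,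
and differentiating in `t`, exchanging the mixed partials of `q` (Schwarz) and using the second
equation gives `(1/c) ∂ₜ((1/c) ∂ₜp) = ∂ₓ²p - (2λ/c) ∂ₓq = ∂ₓ²p - (2λ/c²) ∂ₜp`.
-/

open Function

section PartialDerivatives

variable {E : Type*} [NormedAddCommGroup E] [NormedSpace ℝ E] {G : ℝ × ℝ → E} {x t : ℝ}

theorem DifferentiableAt.hasDerivAt_partial_fst (hG : DifferentiableAt ℝ G (x, t)) :
    HasDerivAt (fun y => G (y, t)) (fderiv ℝ G (x, t) (1, 0)) x :=
  hG.hasFDerivAt.comp_hasDerivAt x ((hasDerivAt_id x).prodMk (hasDerivAt_const x t))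

theorem DifferentiableAt.hasDerivAt_partial_snd (hG : DifferentiableAt ℝ G (x, t)) :
    HasDerivAt (fun s => G (x, s)) (fderiv ℝ G (x, t) (0, 1)) t :=
  hG.hasFDerivAt.comp_hasDerivAt t ((hasDerivAt_const t x).prodMk (hasDerivAt_id t))

end PartialDerivatives

section CurriedPartials

variable {F : ℝ → ℝ → ℝ}

theorem Differentiable.differentiableAt_partial_fst (hF : Differentiable ℝ (uncurry F))
    (x t : ℝ) :
    DifferentiableAt ℝ (fun y => F y t) x :=
  (hF (x, t)).hasDerivAt_partial_fst.differentiableAt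

theorem Differentiable.differentiableAt_partial_snd (hF : Differentiable ℝ (uncurry F))
    (x t : ℝ) :
    DifferentiableAt ℝ (fun s => F x s) t :=
  (hF (x, t)).hasDerivAt_partial_snd.differentiableAt

theorem ContDiff.contDiff_uncurry_deriv_fst {n : WithTop ℕ∞}
    (hF : ContDiff ℝ (n + 1) (uncurry F)) :
    ContDiff ℝ n (uncurry fun x t => deriv (fun y => F y t) x) := by
  have hD : Differentiable ℝ (uncurry F) := hF.differentiable (by simp)
  have h : (uncurry fun x t => deriv (fun y => F y t) x)
      = fun z => fderiv ℝ (uncurry F) z (1, 0) :=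
    funext fun z => (hD z).hasDerivAt_partial_fst.deriv
  rw [h]
  exact (hF.fderiv_right le_rfl).clm_apply contDiff_const

theorem ContDiff.deriv_partial_fst_partial_snd_comm (hF : ContDiff ℝ 2 (uncurry F)) (x t : ℝ) :
    deriv (fun s => deriv (fun y => F y s) x) t = deriv (fun y => deriv (fun s => F y s) t) x := by
  set D2 := fderiv ℝ (fderiv ℝ (uncurry F)) (x, t)
  have hD : Differentiable ℝ (uncurry F) := hF.differentiable two_ne_zero
  have hD' : DifferentiableAt ℝ (fderiv ℝ (uncurry F)) (x, t) :=
    (hF.fderiv_right le_rfl).differentiable one_ne_zero (x, t)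
  have hsnd : HasDerivAt (fun s => fderiv ℝ (uncurry F) (x, s) (1, 0)) (D2 (0, 1) (1, 0)) t :=
    (ContinuousLinearMap.apply ℝ ℝ ((1 : ℝ), (0 : ℝ))).hasFDerivAt.comp_hasDerivAt t
      hD'.hasDerivAt_partial_snd
  have hfst : HasDerivAt (fun y => fderiv ℝ (uncurry F) (y, t) (0, 1)) (D2 (1, 0) (0, 1)) x :=
    (ContinuousLinearMap.apply ℝ ℝ ((0 : ℝ), (1 : ℝ))).hasFDerivAt.comp_hasDerivAt x
      hD'.hasDerivAt_partial_fst
  calc deriv (fun s => deriv (fun y => F y s) x) t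
      = deriv (fun s => fderiv ℝ (uncurry F) (x, s) (1, 0)) t := by
        congr 1; funext s; exact (hD (x, s)).hasDerivAt_partial_fst.deriv
    _ = D2 (0, 1) (1, 0) := hsnd.deriv
    _ = D2 (1, 0) (0, 1) := (hF.contDiffAt.isSymmSndFDerivAt (by simp)) _ _
    _ = deriv (fun y => fderiv ℝ (uncurry F) (y, t) (0, 1)) x := hfst.deriv.symm
    _ = deriv (fun y => deriv (fun s => F y s) t) x := by
        congr 1; funext y; exact (hD (y, t)).hasDerivAt_partial_snd.deriv.symm

end CurriedPartials

theorem telegraph_of_first_order_system {p q : ℝ → ℝ → ℝ} {c l : ℝ → ℝ}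
    (hp : ContDiff ℝ 2 (uncurry p)) (hq : ContDiff ℝ 2 (uncurry q)) (hc : ∀ t, c t ≠ 0)
    (hpt : ∀ x t, deriv (fun s => p x s) t = c t * deriv (fun y => q y t) x)
    (hqt : ∀ x t, deriv (fun s => q x s) t = c t * deriv (fun y => p y t) x - 2 * l t * q x t)
    (x t : ℝ) :
    (1 / c t) * deriv (fun s => (1 / c s) * deriv (fun u => p x u) s) t
        + (2 * l t / (c t) ^ 2) * deriv (fun s => p x s) t
      = deriv (deriv (fun y => p y t)) x := by
  have hqx := (hq.differentiable two_ne_zero).differentiableAt_partial_fst x t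
  have hpxx := ((hp.contDiff_uncurry_deriv_fst (n := 1)).differentiable
    one_ne_zero).differentiableAt_partial_fst x t
  have hinner : (fun s => 1 / c s * deriv (fun u => p x u) s) = fun s => deriv (fun y => q y s) x :=
    funext fun s => by rw [hpt, one_div, inv_mul_cancel_left₀ (hc s)]
  have hqtx : deriv (fun y => deriv (fun s => q y s) t) x
      = c t * deriv (deriv fun y => p y t) x - 2 * l t * deriv (fun y => q y t) x := by
    simp only [hqt]
    rw [deriv_fun_sub (hpxx.const_mul _) (hqx.const_mul _), deriv_const_mul _ hpxx,
      deriv_const_mul _ hqx]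
  rw [hinner, hq.deriv_partial_fst_partial_snd_comm, hqtx, hpt]
  field_simp [hc t]
  ring

theorem stmt1_general (a b : ℝ → ℝ → ℝ) (c l : ℝ → ℝ)
    (ha : ContDiff ℝ 2 (Function.uncurry a)) (hb : ContDiff ℝ 2 (Function.uncurry b))
    (hcpos : ∀ t, 0 < c t)
    (heqa : ∀ x t, deriv (fun s => a x s) t =
      -c t * deriv (fun y => a y t) x + l t * (b x t - a x t))
    (heqb : ∀ x t, deriv (fun s => b x s) t =
      c t * deriv (fun y => b y t) x + l t * (a x t - b x t))
    (p : ℝ → ℝ → ℝ) (hp : ∀ x t, p x t = a x t + b x t) :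
    ∀ x t,
      (1 / c t) * deriv (fun s => (1 / c s) * deriv (fun u => p x u) s) t
        + (2 * l t / (c t) ^ 2) * deriv (fun s => p x s) t
      = deriv (deriv (fun y => p y t)) x := by
  obtain rfl : p = fun x t => a x t + b x t := funext₂ hp
  have hax := (ha.differentiable two_ne_zero).differentiableAt_partial_fst
  have hat := (ha.differentiable two_ne_zero).differentiableAt_partial_snd
  have hbx := (hb.differentiable two_ne_zero).differentiableAt_partial_fst
  have hbt := (hb.differentiable two_ne_zero).differentiableAt_partial_snd
  refine telegraph_of_first_order_system (q := fun x t => b x t - a x t) (ha.add hb) (hb.sub ha)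
    (fun t => (hcpos t).ne') (fun x t => ?_) (fun x t => ?_)
  · rw [deriv_fun_add (hat x t) (hbt x t), heqa, heqb, deriv_fun_sub (hbx x t) (hax x t)]
    ring
  · rw [deriv_fun_sub (hbt x t) (hat x t), heqa, heqb, deriv_fun_add (hax x t) (hbx x t)]
    ring

/-- if `a, b` are C² solutions of the forward system with speed
`c(t) > 0` and rate `l(t)`, then `p = a + b` satisfies the telegraph equation
with time-varying coefficients
`(1/c)·∂/∂t[(1/c)·∂p/∂t] + (2l/c²)·∂p/∂t = ∂²p/∂x²`. -/
theorem stmt1 (a b : ℝ → ℝ → ℝ) (c l : ℝ → ℝ)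
    (ha : ContDiff ℝ 2 (Function.uncurry a)) (hb : ContDiff ℝ 2 (Function.uncurry b))
    (hc : ContDiff ℝ 1 c) (hcpos : ∀ t, 0 < c t) (hl : Continuous l)
    (heqa : ∀ x t, deriv (fun s => a x s) t =
      -c t * deriv (fun y => a y t) x + l t * (b x t - a x t))
    (heqb : ∀ x t, deriv (fun s => b x s) t =
      c t * deriv (fun y => b y t) x + l t * (a x t - b x t))
    (p : ℝ → ℝ → ℝ) (hp : ∀ x t, p x t = a x t + b x t) :
    ∀ x t,
      (1 / c t) * deriv (fun s => (1 / c s) * deriv (fun u => p x u) s) t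
        + (2 * l t / (c t) ^ 2) * deriv (fun s => p x s) t
      = deriv (deriv (fun y => p y t)) x :=
  stmt1_general a b c l ha hb hcpos heqa heqb p hp
end

section
/- If w(t) = 1/t for t ≥ 1 (β = 1 case), then the mean square displacement r²(t) = (c₀²/(2λ₀²))·[2λ₀·T(t) − 1 + exp(−2λ₀·T(t))] with T(t) = ∫₀ᵗ w(s)ds satisfies r²(t) / ln(t) → c₀²/λ₀ as t → ∞. -/
open Real MeasureTheory Filter

/-- if `w(t) = 1/t` for `t ≥ 1`, then the mean square
displacement satisfies `r²(t)/ln t → c₀²/λ₀` as `t → ∞` (logarithmic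
diffusion). -/
theorem stmt6 (lam c₀ : ℝ) (hlam : 0 < lam) (hc₀ : 0 < c₀)
    (w : ℝ → ℝ) (hw : Continuous w) (hwnn : ∀ t, 0 ≤ w t)
    (hwval : ∀ t ≥ (1:ℝ), w t = 1 / t)
    (T r2 : ℝ → ℝ) (hT : ∀ t, T t = ∫ s in (0:ℝ)..t, w s)
    (hr2 : ∀ t, r2 t = c₀ ^ 2 / (2 * lam ^ 2) *
      (2 * lam * T t - 1 + Real.exp (-2 * lam * T t))) :
    Tendsto (fun t => r2 t / Real.log t) atTop (nhds (c₀ ^ 2 / lam)) := by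
  set C := T 1 with hC
  set A := c₀ ^ 2 / (2 * lam ^ 2) with hA
  have hTt : ∀ t ≥ (1:ℝ), T t = C + Real.log t := by
    intro t ht
    have hsplit : (∫ s in (0:ℝ)..1, w s) + (∫ s in (1:ℝ)..t, w s)
        = ∫ s in (0:ℝ)..t, w s :=
      intervalIntegral.integral_add_adjacent_intervals
        (hw.intervalIntegrable _ _) (hw.intervalIntegrable _ _)
    have hlog : (∫ s in (1:ℝ)..t, w s) = Real.log t := by
      have h1 : (∫ s in (1:ℝ)..t, w s) = ∫ s in (1:ℝ)..t, 1 / s := by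
        apply intervalIntegral.integral_congr
        intro s hs
        rw [Set.uIcc_of_le ht] at hs
        exact hwval s hs.1
      have h0 : (0:ℝ) ∉ Set.uIcc (1:ℝ) t := by
        rw [Set.uIcc_of_le ht]
        intro h
        exact absurd h.1 (by norm_num)
      rw [h1, integral_one_div h0, div_one]
    rw [hT t, ← hsplit, hlog, ← hT 1]
  -- eventual equality
  have hev : ∀ᶠ t in atTop, r2 t / Real.log t
      = A * (2 * lam) + A * ((2 * lam * C - 1)
        + Real.exp (-2 * lam * (C + Real.log t))) / Real.log t := by
    filter_upwards [eventually_ge_atTop (2:ℝ)] with t ht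
    have h1 : (1:ℝ) ≤ t := by linarith
    have hlogpos : 0 < Real.log t := Real.log_pos (by linarith)
    rw [hr2 t, hTt t h1]
    field_simp
    ring
  rw [show c₀ ^ 2 / lam = A * (2 * lam) + 0 by
    rw [hA]; field_simp; ring]
  apply Tendsto.congr' (hev.mono fun t h => h.symm)
  apply Tendsto.const_add
  have hnum : Tendsto (fun t => (2 * lam * C - 1)
      + Real.exp (-2 * lam * (C + Real.log t))) atTop
      (nhds (2 * lam * C - 1 + 0)) := by
    apply Tendsto.const_add
    apply Real.tendsto_exp_atBot.comp
    have : Tendsto (fun t => C + Real.log t) atTop atTop :=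
      tendsto_atTop_add_const_left _ _ Real.tendsto_log_atTop
    exact this.const_mul_atTop_of_neg (by linarith)
  have h0 : Tendsto (fun t => ((2 * lam * C - 1)
      + Real.exp (-2 * lam * (C + Real.log t))) / Real.log t) atTop (nhds 0) :=
    Tendsto.div_atTop hnum Real.tendsto_log_atTop
  have := h0.const_mul A
  simpa [mul_div_assoc] using this
end

section
/- If w(t) = t^(−β) for t ≥ 1 with 0 < β < 1, then r²(t) = (c₀²/(2λ₀²))·[2λ₀·T(t) − 1 + exp(−2λ₀·T(t))] satisfies r²(t)/t^(1−β) → c₀²/(λ₀·(1−β)) as t → ∞ (anomalous subdiffusion with exponent α = 1 − β). -/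
open Real MeasureTheory Filter

/-- if `w(t) = t^(−β)` for `t ≥ 1` with `0 < β < 1`, then
`r²(t)/t^(1−β) → c₀²/(λ₀(1−β))` as `t → ∞` (anomalous subdiffusion). -/
theorem stmt7 (β lam c₀ : ℝ) (hβ0 : 0 < β) (hβ1 : β < 1) (hlam : 0 < lam) (hc₀ : 0 < c₀)
    (w : ℝ → ℝ) (hw : Continuous w) (hwnn : ∀ t, 0 ≤ w t)
    (hwval : ∀ t ≥ (1:ℝ), w t = t ^ (-β))
    (T r2 : ℝ → ℝ) (hT : ∀ t, T t = ∫ s in (0:ℝ)..t, w s)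
    (hr2 : ∀ t, r2 t = c₀ ^ 2 / (2 * lam ^ 2) *
      (2 * lam * T t - 1 + Real.exp (-2 * lam * T t))) :
    Tendsto (fun t => r2 t / t ^ (1 - β)) atTop (nhds (c₀ ^ 2 / (lam * (1 - β)))) := by
  set α := 1 - β with hα
  have hα0 : 0 < α := by simp [hα]; linarith
  set C := T 1 with hCdef
  -- explicit formula for T on [1, ∞)
  have hTf : ∀ t ≥ (1:ℝ), T t = C + (t ^ α - 1) / α := by
    intro t ht
    have h1 : IntervalIntegrable w volume 0 1 := hw.intervalIntegrable _ _
    have h2 : IntervalIntegrable w volume 1 t := hw.intervalIntegrable _ _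
    have hsplit : T t = (∫ s in (0:ℝ)..1, w s) + ∫ s in (1:ℝ)..t, w s := by
      rw [hT, intervalIntegral.integral_add_adjacent_intervals h1 h2]
    have hcongr : (∫ s in (1:ℝ)..t, w s) = ∫ s in (1:ℝ)..t, s ^ (-β) := by
      apply intervalIntegral.integral_congr
      intro s hs
      rw [Set.uIcc_of_le ht] at hs
      exact hwval s hs.1
    have hrpow : (∫ s in (1:ℝ)..t, s ^ (-β)) = (t ^ α - 1) / α := by
      rw [integral_rpow (Or.inl (by linarith : (-1:ℝ) < -β))]
      norm_num [hα]
      ring_nf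
    rw [hsplit, hcongr, hrpow, hCdef, hT]
  -- T is nonneg for t ≥ 0
  have hTnn : ∀ t ≥ (0:ℝ), 0 ≤ T t := by
    intro t ht
    rw [hT]
    exact intervalIntegral.integral_nonneg ht (fun x _ => hwnn x)
  have hpow : Tendsto (fun t : ℝ => t ^ α) atTop atTop := tendsto_rpow_atTop hα0
  have hinv : Tendsto (fun t : ℝ => (t ^ α)⁻¹) atTop (nhds 0) := hpow.inv_tendsto_atTop
  -- exp term goes to 0
  have hE : Tendsto (fun t : ℝ => Real.exp (-2 * lam * T t) * (t ^ α)⁻¹) atTop (nhds 0) := by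
    apply squeeze_zero' (g := fun t : ℝ => (t ^ α)⁻¹)
    · filter_upwards [eventually_ge_atTop (1:ℝ)] with t ht
      positivity
    · filter_upwards [eventually_ge_atTop (1:ℝ)] with t ht
      have h1 : Real.exp (-2 * lam * T t) ≤ 1 := by
        apply Real.exp_le_one_iff.mpr
        have := hTnn t (by linarith)
        nlinarith
      have h2 : (0:ℝ) ≤ (t ^ α)⁻¹ := by positivity
      nlinarith
    · exact hinv
  have h1 : Tendsto (fun t : ℝ => C * (t ^ α)⁻¹ + 1 / α - (1 / α) * (t ^ α)⁻¹) atTop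
      (nhds (C * 0 + 1 / α - (1 / α) * 0)) :=
    ((hinv.const_mul C).add tendsto_const_nhds).sub (hinv.const_mul (1 / α))
  have h2 := ((h1.const_mul (2 * lam)).sub hinv).add hE
  have h3 := h2.const_mul (c₀ ^ 2 / (2 * lam ^ 2))
  simp only [sub_zero, add_zero] at h3
  have hlim : c₀ ^ 2 / (2 * lam ^ 2) * (2 * lam * (C * 0 + 1 / α - 1 / α * 0))
      = c₀ ^ 2 / (lam * (1 - β)) := by
    rw [← hα]
    field_simp
    ring
  rw [← hlim]
  apply h3.congr'
  filter_upwards [eventually_ge_atTop (1:ℝ)] with t ht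
  have htpos : (0:ℝ) < t ^ α := rpow_pos_of_pos (by linarith) α
  rw [hr2, hTf t ht]
  field_simp
  ring
end

section
/- If w(t) = t^(−β) with β < 0 (so w grows as a positive power of t) for t ≥ 1, then r²(t) = (c₀²/(2λ₀²))·[2λ₀·T(t) − 1 + exp(−2λ₀·T(t))] satisfies r²(t)/t^(1−β) → c₀²/(λ₀·(1−β)) as t → ∞; in particular since 1 − β > 1 the process is superdiffusive. -/
open Real MeasureTheory Filter

/-- if `w(t) = t^(−β)` for `t ≥ 1` with `β < 0`, then
`r²(t)/t^(1−β) → c₀²/(λ₀(1−β))` as `t → ∞`; since `1 − β > 1` the process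
is superdiffusive. -/
theorem stmt9 (β lam c₀ : ℝ) (hβ : β < 0) (hlam : 0 < lam) (hc₀ : 0 < c₀)
    (w : ℝ → ℝ) (hw : Continuous w) (hwnn : ∀ t, 0 ≤ w t)
    (hwval : ∀ t ≥ (1:ℝ), w t = t ^ (-β))
    (T r2 : ℝ → ℝ) (hT : ∀ t, T t = ∫ s in (0:ℝ)..t, w s)
    (hr2 : ∀ t, r2 t = c₀ ^ 2 / (2 * lam ^ 2) *
      (2 * lam * T t - 1 + Real.exp (-2 * lam * T t))) :
    Tendsto (fun t => r2 t / t ^ (1 - β)) atTop (nhds (c₀ ^ 2 / (lam * (1 - β))))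
      ∧ 1 < 1 - β := by
  have hb1 : (0:ℝ) < 1 - β := by linarith
  -- formula for T on [1, ∞)
  have hTf : ∀ t ≥ (1:ℝ), T t = T 1 + (t ^ (1 - β) - 1) / (1 - β) := by
    intro t ht
    have hsplit : (∫ s in (0:ℝ)..1, w s) + (∫ s in (1:ℝ)..t, w s) = ∫ s in (0:ℝ)..t, w s :=
      intervalIntegral.integral_add_adjacent_intervals (hw.intervalIntegrable 0 1)
        (hw.intervalIntegrable 1 t)
    have hcong : (∫ s in (1:ℝ)..t, w s) = ∫ s in (1:ℝ)..t, s ^ (-β) := by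
      apply intervalIntegral.integral_congr
      intro s hs
      rw [Set.uIcc_of_le ht] at hs
      exact hwval s hs.1
    have hrpow : (∫ s in (1:ℝ)..t, s ^ (-β)) = (t ^ (1 - β) - 1) / (1 - β) := by
      rw [integral_rpow (Or.inl (by linarith))]
      rw [Real.one_rpow, show -β + 1 = 1 - β from by ring]
    rw [hT t, hT 1, ← hsplit, hcong, hrpow]
  have h1 : Tendsto (fun t : ℝ => t ^ (1 - β)) atTop atTop := tendsto_rpow_atTop hb1
  have hinv : Tendsto (fun t : ℝ => (t ^ (1 - β))⁻¹) atTop (nhds 0) :=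
    h1.inv_tendsto_atTop
  have hTtop : Tendsto T atTop atTop := by
    apply Tendsto.congr' ((eventually_ge_atTop (1:ℝ)).mono fun t ht => (hTf t ht).symm)
    apply tendsto_atTop_add_const_left
    exact (tendsto_atTop_add_const_right _ _ h1).atTop_div_const hb1
  have hexp : Tendsto (fun t => Real.exp (-2 * lam * T t)) atTop (nhds 0) := by
    apply Real.tendsto_exp_atBot.comp
    have : Tendsto (fun t => (-2 * lam) * T t) atTop atBot := by
      apply Tendsto.const_mul_atTop_of_neg (by linarith) hTtop
    exact this
  have hTdiv : Tendsto (fun t => T t * (t ^ (1 - β))⁻¹) atTop (nhds (1 / (1 - β))) := by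
    have hev : ∀ᶠ t in atTop, T 1 * (t ^ (1 - β))⁻¹ + (1 - (t ^ (1 - β))⁻¹) / (1 - β)
        = T t * (t ^ (1 - β))⁻¹ := by
      filter_upwards [eventually_ge_atTop (1:ℝ)] with t ht
      have hx : (0:ℝ) < t ^ (1 - β) := Real.rpow_pos_of_pos (by linarith) _
      rw [hTf t ht]
      field_simp
    apply Tendsto.congr' hev
    have : Tendsto (fun t : ℝ => T 1 * (t ^ (1 - β))⁻¹ + (1 - (t ^ (1 - β))⁻¹) / (1 - β))
        atTop (nhds (T 1 * 0 + (1 - 0) / (1 - β))) := by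
      exact ((hinv.const_mul _).add (((tendsto_const_nhds).sub hinv).div_const _))
    simpa using this
  constructor
  · have hev : ∀ᶠ t in atTop,
        c₀ ^ 2 / (2 * lam ^ 2) * (2 * lam * (T t * (t ^ (1 - β))⁻¹)
          + (-1 + Real.exp (-2 * lam * T t)) * (t ^ (1 - β))⁻¹)
        = r2 t / t ^ (1 - β) := by
      filter_upwards [eventually_ge_atTop (1:ℝ)] with t ht
      have hx : (0:ℝ) < t ^ (1 - β) := Real.rpow_pos_of_pos (by linarith) _
      rw [hr2 t]
      field_simp
      ring
    apply Tendsto.congr' hev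
    have hlim : Tendsto (fun t => 2 * lam * (T t * (t ^ (1 - β))⁻¹)
          + (-1 + Real.exp (-2 * lam * T t)) * (t ^ (1 - β))⁻¹)
        atTop (nhds (2 * lam * (1 / (1 - β)) + (-1 + 0) * 0)) :=
      ((hTdiv.const_mul _).add ((((tendsto_const_nhds).add hexp)).mul hinv))
    have := hlim.const_mul (c₀ ^ 2 / (2 * lam ^ 2))
    convert this using 2
    field_simp
    ring
  · linarith
end

section
/- If p(x,τ) solves the constant-coefficient telegraph equation ∂²p/∂τ² + 2λ₀·∂p/∂τ = c₀²·∂²p/∂x² and t ↦ τ(t) = ∫₀ᵗ w(s)ds with w continuous and positive, then q(x,t) := p(x, τ(t)) solves the time-varying telegraph equation (1/(c₀w(t)))·∂/∂t[(1/(c₀w(t)))·∂q/∂t] + (2λ₀w(t)/(c₀w(t))²)·∂q/∂t = ∂²q/∂x². -/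
/-!
Since `τ' = w`, the chain rule turns `(1 / w) ∂ₜ` into `∂_τ`, so the time-varying equation
for `q` is the constant-coefficient equation for `p`, evaluated at `τ(t)` and divided by `c₀²`.
-/

open Real MeasureTheory

theorem deriv_comp_of_hasDerivAt {g T w : ℝ → ℝ} (hg : Differentiable ℝ g)
    (hT : ∀ s, HasDerivAt T (w s) s) (s : ℝ) :
    deriv (fun u => g (T u)) s = deriv g (T s) * w s :=
  ((hg (T s)).hasDerivAt.comp s (hT s)).deriv

/-- The factor `w` produced by the chain rule cancels the `1 / w` in front, leaving `(g' ∘ T) / c`. -/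
theorem deriv_one_div_mul_deriv_comp {g T w : ℝ → ℝ} (c : ℝ) (hg : Differentiable ℝ g)
    (hg' : Differentiable ℝ (deriv g)) (hT : ∀ s, HasDerivAt T (w s) s) (hw : ∀ s, w s ≠ 0)
    (t : ℝ) :
    deriv (fun s => 1 / (c * w s) * deriv (fun u => g (T u)) s) t
      = 1 / c * (deriv (deriv g) (T t) * w t) := by
  have hcancel : (fun s => 1 / (c * w s) * deriv (fun u => g (T u)) s)
      = fun s => 1 / c * deriv g (T s) := by
    funext s
    rw [deriv_comp_of_hasDerivAt hg hT, one_div_mul_eq_div, one_div_mul_eq_div,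
      mul_comm c, ← div_div, mul_div_cancel_right₀ _ (hw s)]
  rw [hcancel]
  exact (((hg' (T t)).hasDerivAt.comp t (hT t)).const_mul (1 / c)).deriv

theorem stmt18_general (lam c₀ : ℝ) (hc₀ : 0 < c₀)
    (w : ℝ → ℝ) (hw : Continuous w) (hwpos : ∀ t, 0 < w t)
    (p : ℝ → ℝ → ℝ) (hp : ContDiff ℝ 2 (Function.uncurry p))
    (heq : ∀ x τ, deriv (deriv (fun σ => p x σ)) τ + 2 * lam * deriv (fun σ => p x σ) τ
      = c₀ ^ 2 * deriv (deriv (fun y => p y τ)) x)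
    (q : ℝ → ℝ → ℝ) (hq : ∀ x t, q x t = p x (∫ s in (0:ℝ)..t, w s)) :
    ∀ x t,
      (1 / (c₀ * w t)) * deriv (fun s => (1 / (c₀ * w s)) * deriv (fun u => q x u) s) t
        + (2 * (lam * w t) / (c₀ * w t) ^ 2) * deriv (fun s => q x s) t
      = deriv (deriv (fun y => q y t)) x := by
  intro x t
  set T : ℝ → ℝ := fun t => ∫ s in (0:ℝ)..t, w s
  have hT : ∀ s, HasDerivAt T (w s) s := fun s => (hw.integral_hasStrictDerivAt 0 s).hasDerivAt
  have hpx : ContDiff ℝ 2 (p x) := hp.comp (contDiff_prodMk_right x)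
  have hq_time : (fun u => q x u) = fun u => p x (T u) := funext (hq x)
  have hq_space : (fun y => q y t) = fun y => p y (T t) := funext fun y => hq y t
  rw [hq_time, hq_space,
    deriv_one_div_mul_deriv_comp c₀ (hpx.differentiable two_ne_zero) hpx.differentiable_deriv_two
      hT (fun s => (hwpos s).ne') t,
    deriv_comp_of_hasDerivAt (hpx.differentiable two_ne_zero) hT]
  have hwt := (hwpos t).ne'
  have hc := hc₀.ne'
  field_simp
  linear_combination heq x (T t)

/-- if `p` is a C² solution of the constant-coefficient
telegraph equation `∂²p/∂τ² + 2λ₀ ∂p/∂τ = c₀² ∂²p/∂x²` and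
`τ(t) = ∫₀ᵗ w` with `w` continuous positive, then `q(x,t) := p(x, τ(t))`
solves the time-varying telegraph equation with speed `c₀w(t)` and rate
`λ₀w(t)`. -/
theorem stmt18 (lam c₀ : ℝ) (hlam : 0 < lam) (hc₀ : 0 < c₀)
    (w : ℝ → ℝ) (hw : Continuous w) (hwpos : ∀ t, 0 < w t)
    (p : ℝ → ℝ → ℝ) (hp : ContDiff ℝ 2 (Function.uncurry p))
    (heq : ∀ x τ, deriv (deriv (fun σ => p x σ)) τ + 2 * lam * deriv (fun σ => p x σ) τ
      = c₀ ^ 2 * deriv (deriv (fun y => p y τ)) x)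
    (q : ℝ → ℝ → ℝ) (hq : ∀ x t, q x t = p x (∫ s in (0:ℝ)..t, w s)) :
    ∀ x t,
      (1 / (c₀ * w t)) * deriv (fun s => (1 / (c₀ * w s)) * deriv (fun u => q x u) s) t
        + (2 * (lam * w t) / (c₀ * w t) ^ 2) * deriv (fun s => q x s) t
      = deriv (deriv (fun y => q y t)) x :=
  stmt18_general lam c₀ hc₀ w hw hwpos p hp heq q hq
end
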